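/- arXiv:2108.11241 — 3 statements merged into one kernel-verified Lean document; each statement's English description precedes it below -/
import Mathlib

section
/- Let A be a commutative ring and let (a,b) ∈ A² be a unimodular row. The following are equivalent: (1) there exist a₀, …, aₙ ∈ A such that the class of (a,b) equals ∞·S(aₙ)S(aₙ₋₁)···S(a₀); (2) the pair (a,b) satisfies a weak Euclidean algorithm, i.e. there exist a₀, …, aₙ ∈ A and r₀, …, rₙ₋₁ ∈ A such that, setting r₋₂ := a, r₋₁ := b and rₙ := 0, one has r_{k−2} = a_k r_{k−1} + r_k for all 0 ≤ k ≤ n. -/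
open Matrix

/-- A row `(a,b) ∈ A²` is unimodular if `∃ r s, r*a + s*b = 1`. -/
def IsUnimod {A : Type*} [CommRing A] (v : Fin 2 → A) : Prop :=
  ∃ r s : A, r * v 0 + s * v 1 = 1

/-- Unimodular rows of length 2. -/
abbrev UnimodRow (A : Type*) [CommRing A] := {v : Fin 2 → A // IsUnimod v}

/-- Two unimodular rows are equivalent if they differ by multiplication by a unit. -/
instance vertexSetoid (A : Type*) [CommRing A] : Setoid (UnimodRow A) where
  r v w := ∃ u : Aˣ, (u : A) • v.1 = w.1
  iseqv := by
    refine ⟨fun v => ⟨1, by simp⟩, ?_, ?_⟩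
    · rintro v w ⟨u, h⟩
      exact ⟨u⁻¹, by rw [← h, smul_smul, Units.inv_mul, one_smul]⟩
    · rintro v w z ⟨u, h⟩ ⟨u', h'⟩
      exact ⟨u' * u, by rw [← h', ← h, smul_smul, ← Units.val_mul]⟩

/-- The vertices of the graph Γ(A): unimodular rows up to multiplication by a unit. -/
def Vertex (A : Type*) [CommRing A] := Quotient (vertexSetoid A)

/-- The graph Γ(A). -/
def GammaGraph (A : Type*) [CommRing A] : SimpleGraph (Vertex A) where
  Adj x y := x ≠ y ∧ ∃ v w : UnimodRow A, x = ⟦v⟧ ∧ y = ⟦w⟧ ∧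
    IsUnit (v.1 0 * w.1 1 - v.1 1 * w.1 0)
  symm := by
    refine ⟨?_⟩
    rintro x y ⟨hne, v, w, hx, hy, hd⟩
    refine ⟨hne.symm, w, v, hy, hx, ?_⟩
    have h : w.1 0 * v.1 1 - w.1 1 * v.1 0 = -(v.1 0 * w.1 1 - v.1 1 * w.1 0) := by ring
    rw [h]
    exact hd.neg
  loopless := ⟨fun x h => h.1 rfl⟩

theorem isUnimod_vecMul {A : Type*} [CommRing A] {v : Fin 2 → A} (h : IsUnimod v)
    (M : GL (Fin 2) A) : IsUnimod (vecMul v (M : Matrix (Fin 2) (Fin 2) A)) := by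
  obtain ⟨r, s, hrs⟩ := h
  set w : Fin 2 → A := ((M⁻¹ : GL (Fin 2) A) : Matrix (Fin 2) (Fin 2) A) *ᵥ ![r, s] with hw
  refine ⟨w 0, w 1, ?_⟩
  have h1 : vecMul v (M : Matrix (Fin 2) (Fin 2) A) ⬝ᵥ w = v ⬝ᵥ ![r, s] := by
    rw [hw, ← dotProduct_mulVec, mulVec_mulVec, Units.mul_inv, one_mulVec]
  simp only [dotProduct, Fin.sum_univ_two] at h1
  simp only [Matrix.cons_val_zero, Matrix.cons_val_one, Matrix.head_cons] at h1
  linear_combination h1 + hrs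

/-- The right action of GL₂(A) on the vertices of Γ(A). -/
def vertexMul {A : Type*} [CommRing A] (x : Vertex A) (M : GL (Fin 2) A) : Vertex A :=
  Quotient.map (fun v => ⟨vecMul v.1 (M : Matrix (Fin 2) (Fin 2) A), isUnimod_vecMul v.2 M⟩)
    (by
      rintro v w ⟨u, h⟩
      refine ⟨u, ?_⟩
      show (u : A) • (vecMul v.1 (M : Matrix (Fin 2) (Fin 2) A)) =
        vecMul w.1 (M : Matrix (Fin 2) (Fin 2) A)
      rw [← h, Matrix.smul_vecMul]) x

/-- The vertex ∞ = [(1,0)]. -/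
def vInf (A : Type*) [CommRing A] : Vertex A := ⟦⟨![1, 0], ⟨1, 0, by norm_num⟩⟩⟧

/-- The vertex 0 = [(0,1)]. -/
def vZero (A : Type*) [CommRing A] : Vertex A := ⟦⟨![0, 1], ⟨0, 1, by norm_num⟩⟩⟧

/-- The vertex 1 = [(1,1)]. -/
def vOne (A : Type*) [CommRing A] : Vertex A := ⟦⟨![1, 1], ⟨1, 0, by norm_num⟩⟩⟧
open Matrix

/-- E(a) = [[a,1],[-1,0]] as an element of GL₂. -/
def Egl {A : Type*} [CommRing A] (a : A) : GL (Fin 2) A :=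
  ⟨!![a, 1; -1, 0], !![0, -1; 1, a],
    by ext i j; fin_cases i <;> fin_cases j <;> simp [Matrix.mul_apply, Fin.sum_univ_two],
    by ext i j; fin_cases i <;> fin_cases j <;> simp [Matrix.mul_apply, Fin.sum_univ_two]⟩

/-- S(a) = [[a,1],[1,0]] as an element of GL₂. -/
def Sgl {A : Type*} [CommRing A] (a : A) : GL (Fin 2) A :=
  ⟨!![a, 1; 1, 0], !![0, 1; 1, -a],
    by ext i j; fin_cases i <;> fin_cases j <;> simp [Matrix.mul_apply, Fin.sum_univ_two],
    by ext i j; fin_cases i <;> fin_cases j <;> simp [Matrix.mul_apply, Fin.sum_univ_two]⟩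

/-- The elementary matrix E₁₂(a) = [[1,a],[0,1]] in GL₂. -/
def E12gl {A : Type*} [CommRing A] (a : A) : GL (Fin 2) A :=
  ⟨!![1, a; 0, 1], !![1, -a; 0, 1],
    by ext i j; fin_cases i <;> fin_cases j <;> simp [Matrix.mul_apply, Fin.sum_univ_two],
    by ext i j; fin_cases i <;> fin_cases j <;> simp [Matrix.mul_apply, Fin.sum_univ_two]⟩

/-- The elementary matrix E₂₁(a) = [[1,0],[a,1]] in GL₂. -/
def E21gl {A : Type*} [CommRing A] (a : A) : GL (Fin 2) A :=
  ⟨!![1, 0; a, 1], !![1, 0; -a, 1],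
    by ext i j; fin_cases i <;> fin_cases j <;> simp [Matrix.mul_apply, Fin.sum_univ_two],
    by ext i j; fin_cases i <;> fin_cases j <;> simp [Matrix.mul_apply, Fin.sum_univ_two]⟩

/-- GE₂(A): the subgroup of GL₂(A) generated by the elementary matrices and the
invertible diagonal matrices. -/
def GE2 (A : Type*) [CommRing A] : Subgroup (GL (Fin 2) A) :=
  Subgroup.closure
    ({M | ∃ a : A, M = E12gl a} ∪ {M | ∃ a : A, M = E21gl a} ∪
      {M | (M : Matrix (Fin 2) (Fin 2) A) 0 1 = 0 ∧ (M : Matrix (Fin 2) (Fin 2) A) 1 0 = 0})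

/-- Given `f : A → G` and a tuple `(a 0, …, a (n-1))`, the product
`f (a (n-1)) * ⋯ * f (a 1) * f (a 0)` (rightmost factor first). -/
def wordProd {A : Type*} {G : Type*} [Monoid G] (f : A → G) :
    {n : ℕ} → (Fin n → A) → G
  | 0, _ => 1
  | n + 1, a => f (a (Fin.last n)) * wordProd f (fun j : Fin n => a j.castSucc)

/-- The pair (a,b) satisfies a weak Euclidean algorithm: there are a₀,…,aₙ and
r₀,…,r_{n-1} such that, with r₋₂ := a, r₋₁ := b and rₙ := 0, one has
r_{k-2} = a_k r_{k-1} + r_k for 0 ≤ k ≤ n.  (Here `r (k+2)` plays the role of `r_k`.) -/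
def WeakEuclidean {A : Type*} [CommRing A] (a b : A) : Prop :=
  ∃ (n : ℕ) (q : Fin (n + 1) → A) (r : ℕ → A),
    r 0 = a ∧ r 1 = b ∧ r (n + 2) = 0 ∧
    ∀ k : Fin (n + 1), r k.1 = q k * r (k.1 + 1) + r (k.1 + 2)

/-! The Euclidean step `r k = q k * r (k + 1) + r (k + 2)` says exactly that
`(r (k + 1), r (k + 2)) S(q k) = (r k, r (k + 1))`. Hence a remainder sequence ending in
`(r (n + 1), 0)` exhibits `(a, b) = r (n + 1) • (1, 0) S(qₙ) ⋯ S(q₀)`, and conversely such a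
product unwinds backwards into a remainder sequence. Unimodularity of `(a, b)` forces the
scalar `r (n + 1)` to be a unit, so `(a, b)` lies in the class `∞ · S(qₙ) ⋯ S(q₀)`. -/

theorem wordProd_eq_wordProd_tail_mul {A G : Type*} [Monoid G] (f : A → G) :
    ∀ {n : ℕ} (c : Fin (n + 1) → A), wordProd f c = wordProd f (Fin.tail c) * f (c 0)
  | 0, c => by simp [wordProd]
  | n + 1, c => by
    rw [wordProd, wordProd_eq_wordProd_tail_mul f (fun j : Fin (n + 1) => c j.castSucc), wordProd,
      mul_assoc]
    rfl

section

variable {A : Type*} [CommRing A]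

theorem vecMul_Sgl (a x y : A) :
    ![x, y] ᵥ* (Sgl a : Matrix (Fin 2) (Fin 2) A) = ![x * a + y, x] := by
  ext i
  fin_cases i <;> simp [Sgl, vecMul, dotProduct, Fin.sum_univ_two]

theorem vecMul_wordProd_Sgl {n : ℕ} (q : Fin n → A) (r : ℕ → A)
    (hr : ∀ k : Fin n, r k = q k * r (k + 1) + r (k + 2)) :
    ![r n, r (n + 1)] ᵥ* ((wordProd Sgl q : GL (Fin 2) A) : Matrix (Fin 2) (Fin 2) A) =
      ![r 0, r 1] := by
  induction n generalizing r with
  | zero => simp [wordProd]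
  | succ n ih =>
    have htail := ih (Fin.tail q) (fun k => r (k + 1)) fun k => by
      simpa [Fin.tail, add_right_comm _ 2 1] using hr k.succ
    rw [wordProd_eq_wordProd_tail_mul, Units.val_mul, ← vecMul_vecMul, htail, vecMul_Sgl]
    simpa [mul_comm] using (hr 0).symm

theorem exists_remainders {n : ℕ} (q : Fin n → A) (x y : A) :
    ∃ r : ℕ → A, r n = x ∧ r (n + 1) = y ∧
      ∀ k : Fin n, r k = q k * r (k + 1) + r (k + 2) := by
  induction n with
  | zero => exact ⟨fun k => if k = 0 then x else y, by simp, by simp, fun k => k.elim0⟩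
  | succ n ih =>
    obtain ⟨r, hx, hy, hr⟩ := ih (Fin.tail q)
    refine ⟨fun | 0 => q 0 * r 0 + r 1 | k + 1 => r k, hx, hy, fun k => ?_⟩
    cases k using Fin.cases with
    | zero => rfl
    | succ k => exact hr k

theorem mk_eq_vertexMul_vInf_iff (v : UnimodRow A) (M : GL (Fin 2) A) :
    (⟦v⟧ : Vertex A) = vertexMul (vInf A) M ↔
      ∃ x : A, ![x, 0] ᵥ* (M : Matrix (Fin 2) (Fin 2) A) = v.1 := by
  have hrow (x : A) : ![x, 0] ᵥ* (M : Matrix (Fin 2) (Fin 2) A) =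
      x • (![1, 0] ᵥ* (M : Matrix (Fin 2) (Fin 2) A)) := by
    rw [← smul_vecMul]; simp
  refine eq_comm.trans ?_
  rw [vertexMul, vInf, Quotient.map_mk, Quotient.eq]
  constructor
  · rintro ⟨u, hu⟩
    exact ⟨u, by rw [hrow, ← hu]⟩
  · rintro ⟨x, hx⟩
    have hunimod := isUnimod_vecMul v.2 M⁻¹
    rw [← hx, vecMul_vecMul, ← Units.val_mul, mul_inv_cancel, Units.val_one,
      vecMul_one] at hunimod
    obtain ⟨s, t, hst⟩ := hunimod
    obtain ⟨u, rfl⟩ : IsUnit x := .of_mul_eq_one_right s (by simpa using hst)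
    exact ⟨u, by rw [← hrow, hx]⟩

end

/-- For a unimodular row (a,b): the class of (a,b) equals
∞·S(aₙ)⋯S(a₀) for some a₀,…,aₙ ∈ A iff (a,b) satisfies a weak Euclidean algorithm. -/
theorem stmt8 (A : Type*) [CommRing A] (a b : A) (h : IsUnimod ![a, b]) :
    (∃ (n : ℕ) (c : Fin (n + 1) → A),
      (⟦(⟨![a, b], h⟩ : UnimodRow A)⟧ : Vertex A) = vertexMul (vInf A) (wordProd Sgl c)) ↔
    WeakEuclidean a b := by
  simp only [mk_eq_vertexMul_vInf_iff]
  constructor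
  · rintro ⟨n, q, x, hx⟩
    obtain ⟨r, hn, hn', hr⟩ := exists_remainders q x 0
    have hab := vecMul_wordProd_Sgl q r hr
    rw [hn, hn', hx] at hab
    exact ⟨n, q, r, (congrFun hab 0).symm, (congrFun hab 1).symm, hn', hr⟩
  · rintro ⟨n, q, r, h0, h1, hn, hr⟩
    refine ⟨n, q, r (n + 1), ?_⟩
    rw [← hn, vecMul_wordProd_Sgl q r hr, h0, h1]
end

section
/- If A is a Euclidean domain, then the graph Γ(A) is connected. -/
/-! Every unimodular row `(a, b)` with `b ≠ 0` is adjacent to a row whose second entry is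
`r % b`, where `r a + s b = 1` is a Bézout relation; so the Euclidean algorithm on the second
entry walks from any vertex down to a row `(a, 0)`, which is the vertex `∞ = [(1, 0)]`. -/

open Matrix

namespace GammaGraph

variable {A : Type*}

lemma reachable_mk_of_isUnit_det [CommRing A] {v w : UnimodRow A}
    (h : IsUnit (v.1 0 * w.1 1 - v.1 1 * w.1 0)) :
    (GammaGraph A).Reachable ⟦v⟧ ⟦w⟧ := by
  by_cases heq : (⟦v⟧ : Vertex A) = ⟦w⟧
  · exact heq ▸ .refl _
  · exact SimpleGraph.Adj.reachable ⟨heq, v, w, rfl, rfl, h⟩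

lemma vInf_eq_mk_of_snd_eq_zero [CommRing A] {v : UnimodRow A} (h : v.1 1 = 0) :
    vInf A = ⟦v⟧ := by
  obtain ⟨r, s, hrs⟩ := v.2
  rw [h, mul_zero, add_zero] at hrs
  refine Quotient.sound ⟨⟨v.1 0, r, by rw [mul_comm, hrs], hrs⟩, ?_⟩
  funext i
  fin_cases i <;> simp [h]

lemma exists_isUnit_det_snd_eq [CommRing A] {v : UnimodRow A} {r s : A}
    (hrs : r * v.1 0 + s * v.1 1 = 1) (t : A) :
    ∃ w : UnimodRow A, w.1 1 = r + t * v.1 1 ∧ IsUnit (w.1 0 * v.1 1 - w.1 1 * v.1 0) := by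
  refine ⟨⟨![t * v.1 0 - s, r + t * v.1 1], -v.1 1, v.1 0, ?_⟩, rfl, ?_⟩
  · simp only [cons_val_zero, cons_val_one]
    linear_combination hrs
  · have hdet : (t * v.1 0 - s) * v.1 1 - (r + t * v.1 1) * v.1 0 = -1 := by
      linear_combination -hrs
    simpa only [cons_val_zero, cons_val_one, hdet] using isUnit_one.neg

lemma exists_isUnit_det_snd_lt [EuclideanDomain A] (v : UnimodRow A) (hb : v.1 1 ≠ 0) :
    ∃ w : UnimodRow A, EuclideanDomain.r (w.1 1) (v.1 1) ∧
      IsUnit (w.1 0 * v.1 1 - w.1 1 * v.1 0) := by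
  obtain ⟨r, s, hrs⟩ := v.2
  obtain ⟨w, hw, hdet⟩ := exists_isUnit_det_snd_eq hrs (-(r / v.1 1))
  refine ⟨w, ?_, hdet⟩
  have hmod : w.1 1 = r % v.1 1 := by
    rw [hw, EuclideanDomain.mod_eq_sub_mul_div]
    ring
  exact hmod ▸ EuclideanDomain.mod_lt r hb

lemma reachable_vInf_mk [EuclideanDomain A] (v : UnimodRow A) :
    (GammaGraph A).Reachable (vInf A) ⟦v⟧ := by
  induction v using (InvImage.wf (fun v : UnimodRow A => v.1 1)
    EuclideanDomain.r_wellFounded).induction with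
  | _ v ih =>
    by_cases hb : v.1 1 = 0
    · exact vInf_eq_mk_of_snd_eq_zero hb ▸ .refl _
    · obtain ⟨w, hlt, hdet⟩ := exists_isUnit_det_snd_lt v hb
      exact (ih w hlt).trans (reachable_mk_of_isUnit_det hdet)

end GammaGraph

/-- If A is a Euclidean domain then Γ(A) is connected. -/
theorem stmt10 (A : Type*) [EuclideanDomain A] : (GammaGraph A).Connected :=
  SimpleGraph.connected_iff_exists_forall_reachable _ |>.2
    ⟨vInf A, Quotient.ind GammaGraph.reachable_vInf_mk⟩
end

section
/- Let A be a commutative ring, a₁, …, aₙ ∈ A, and β = β(u,c) ∈ 𝔹 ⊆ C(A) with unit u = u(β). Define b₁ := a₁u² + cu·u = a₁·β (the action of β on a₁) and bᵢ := u^{(−1)^{i−1}·2} aᵢ for 2 ≤ i ≤ n. Then for every 1 ≤ i ≤ n, ε(bᵢ)ε(bᵢ₋₁)···ε(b₁) = h(u)^{(−1)^{i−1}} ε(aᵢ)ε(aᵢ₋₁)···ε(a₁) β in C(A), and b₁, …, bₙ are the unique elements of A with this property. -/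
open Matrix

/-- The word `h(u) = ε(-u)ε(-u⁻¹)ε(-u)` in the free group on the symbols `ε(a)`, `a ∈ A`. -/
def hFree {A : Type*} [CommRing A] (u : Aˣ) : FreeGroup A :=
  FreeGroup.of (-(u : A)) * FreeGroup.of (-((u⁻¹ : Aˣ) : A)) * FreeGroup.of (-(u : A))

/-- The defining relations of Cohn's group C(A). -/
def CRels (A : Type*) [CommRing A] : Set (FreeGroup A) :=
  {x | ∃ u v : Aˣ, x = hFree u * hFree v * (hFree (u * v))⁻¹} ∪
  {x | ∃ a b : A, x = FreeGroup.of a * FreeGroup.of (0 : A) * FreeGroup.of b *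
      (hFree (-1) * FreeGroup.of (a + b))⁻¹} ∪
  {x | ∃ (u : Aˣ) (a : A), x = hFree u * FreeGroup.of a * hFree u *
      (FreeGroup.of ((u : A) ^ 2 * a))⁻¹}

/-- Cohn's group C(A), presented by generators ε(a), a ∈ A, and the three families of
relations h(u)h(v) = h(uv), ε(a)ε(0)ε(b) = h(-1)ε(a+b), h(u)ε(a)h(u) = ε(u²a). -/
abbrev CGroup (A : Type*) [CommRing A] := PresentedGroup (CRels A)

/-- The generator ε(a) of C(A). -/
def epsC {A : Type*} [CommRing A] (a : A) : CGroup A := PresentedGroup.of a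

/-- h(u) = ε(-u)ε(-u⁻¹)ε(-u) in C(A). -/
def hC {A : Type*} [CommRing A] (u : Aˣ) : CGroup A :=
  epsC (-(u : A)) * epsC (-((u⁻¹ : Aˣ) : A)) * epsC (-(u : A))

/-- y(a) = ε(0)³ε(a) in C(A). -/
def yC {A : Type*} [CommRing A] (a : A) : CGroup A := (epsC (0 : A)) ^ 3 * epsC a

/-- ȳ(a) = ε(-a)ε(0)³ in C(A). -/
def ybarC {A : Type*} [CommRing A] (a : A) : CGroup A := epsC (-a) * (epsC (0 : A)) ^ 3

/-- β(u,a) = h(u)y(ua) in C(A). -/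
def betaC {A : Type*} [CommRing A] (u : Aˣ) (a : A) : CGroup A := hC u * yC ((u : A) * a)

/-- E(a) = [[a,1],[-1,0]] as an element of SL₂. -/
def ESL {A : Type*} [CommRing A] (a : A) : Matrix.SpecialLinearGroup (Fin 2) A :=
  ⟨!![a, 1; -1, 0], by simp [Matrix.det_fin_two_of]⟩

/-- D(u) = diag(u, u⁻¹) as an element of SL₂. -/
def DSL {A : Type*} [CommRing A] (u : Aˣ) : Matrix.SpecialLinearGroup (Fin 2) A :=
  ⟨!![(u : A), 0; 0, ((u⁻¹ : Aˣ) : A)], by simp [Matrix.det_fin_two_of]⟩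

theorem ESL_h {A : Type*} [CommRing A] (u : Aˣ) :
    ESL (-(u : A)) * ESL (-((u⁻¹ : Aˣ) : A)) * ESL (-(u : A)) = DSL u := by
  apply Subtype.ext
  show (!![-(u:A), 1; -1, 0] * !![-((u⁻¹:Aˣ):A), 1; -1, 0]) * !![-(u:A), 1; -1, 0] = _
  ext i j
  fin_cases i <;> fin_cases j <;>
    simp [DSL, Matrix.mul_apply, Fin.sum_univ_two]

theorem DSL_mul {A : Type*} [CommRing A] (u v : Aˣ) : DSL u * DSL v = DSL (u * v) := by
  apply Subtype.ext
  show (!![(u:A), 0; 0, ((u⁻¹:Aˣ):A)] * !![(v:A), 0; 0, ((v⁻¹:Aˣ):A)]) = _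
  ext i j
  fin_cases i <;> fin_cases j <;>
    simp [DSL, Matrix.mul_apply, Fin.sum_univ_two, mul_comm]

theorem ESL_rel2 {A : Type*} [CommRing A] (a b : A) :
    ESL a * ESL (0 : A) * ESL b = DSL (-1) * ESL (a + b) := by
  apply Subtype.ext
  show (!![a, 1; -1, 0] * !![(0:A), 1; -1, 0]) * !![b, 1; -1, 0] =
    ((DSL (-1) : Matrix.SpecialLinearGroup (Fin 2) A) : Matrix (Fin 2) (Fin 2) A) *
      ((ESL (a + b) : Matrix.SpecialLinearGroup (Fin 2) A) : Matrix (Fin 2) (Fin 2) A)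
  ext i j
  fin_cases i <;> fin_cases j <;>
    simp [DSL, ESL, Matrix.mul_apply, Fin.sum_univ_two]

theorem ESL_rel3 {A : Type*} [CommRing A] (u : Aˣ) (a : A) :
    DSL u * ESL a * DSL u = ESL ((u : A) ^ 2 * a) := by
  apply Subtype.ext
  show (!![(u:A), 0; 0, ((u⁻¹:Aˣ):A)] * !![a, 1; -1, 0]) * !![(u:A), 0; 0, ((u⁻¹:Aˣ):A)] = _
  ext i j
  fin_cases i <;> fin_cases j <;>
    simp [ESL, Matrix.mul_apply, Fin.sum_univ_two] <;> ring

theorem lift_hFree {A : Type*} [CommRing A] (u : Aˣ) :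
    FreeGroup.lift (fun a : A => ESL a) (hFree u) = DSL u := by
  simp only [hFree, _root_.map_mul, FreeGroup.lift_apply_of]
  exact ESL_h u

theorem CRels_liftable {A : Type*} [CommRing A] :
    ∀ r ∈ CRels A, FreeGroup.lift (fun a : A => ESL a) r = 1 := by
  rintro r ((⟨u, v, rfl⟩ | ⟨a, b, rfl⟩) | ⟨u, a, rfl⟩)
  · rw [_root_.map_mul, _root_.map_mul, map_inv, lift_hFree, lift_hFree, lift_hFree, DSL_mul,
      mul_inv_cancel]
  · simp only [_root_.map_mul, map_inv, FreeGroup.lift_apply_of, lift_hFree]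
    rw [ESL_rel2, mul_inv_cancel]
  · simp only [_root_.map_mul, map_inv, FreeGroup.lift_apply_of, lift_hFree]
    rw [ESL_rel3, mul_inv_cancel]

/-- The homomorphism ψ : C(A) → SL₂(A) with ψ(ε(a)) = E(a). -/
def psiC (A : Type*) [CommRing A] : CGroup A →* Matrix.SpecialLinearGroup (Fin 2) A :=
  PresentedGroup.toGroup CRels_liftable

@[simp] theorem psiC_epsC {A : Type*} [CommRing A] (a : A) : psiC A (epsC a) = ESL a :=
  PresentedGroup.toGroup.of _

/-! Relation (3) says that conjugating by `h(u)` rescales `ε` by `u^{±2}`, so `h(u)^{±1}` can be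
pushed through `ε(aᵢ)⋯ε(a₁)` one letter at a time, its sign alternating. At the last step,
`h(u)ε(a₁)β(u,c) = ε(u²a₁)ε(0)³ε(uc) = ε(a₁u² + cu)`, because `ε(0)² = h(-1)` is a central
involution, which turns relation (2) into `ε(a)ε(0)³ε(b) = ε(a+b)`. For uniqueness, `ε` is
injective (look at the top left entry of its image in `SL₂(A)`), and each letter of a word is
recovered from two consecutive prefixes by cancellation. -/

section WordProd

variable {A G : Type*} [Monoid G] (f : A → G)

theorem wordProd_castLE_succ {n k : ℕ} (x : Fin n → A) (hk : k + 1 ≤ n) :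
    wordProd f (fun j : Fin (k + 1) => x (Fin.castLE hk j)) =
      f (x ⟨k, hk⟩) * wordProd f (fun j : Fin k => x (Fin.castLE (by omega) j)) :=
  rfl

theorem eq_of_wordProd_castLE_eq [IsRightCancelMul G] (hf : Function.Injective f) {n : ℕ}
    {x y : Fin n → A}
    (h : ∀ i : Fin n, wordProd f (fun j : Fin (i.1 + 1) => x (Fin.castLE i.isLt j)) =
      wordProd f (fun j : Fin (i.1 + 1) => y (Fin.castLE i.isLt j))) :
    x = y := by
  have hprefix : ∀ (m : ℕ) (hm : m ≤ n), wordProd f (fun j : Fin m => x (Fin.castLE hm j)) =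
      wordProd f (fun j : Fin m => y (Fin.castLE hm j)) := by
    rintro (_ | m) hm
    · rfl
    · exact h ⟨m, hm⟩
  funext i
  apply hf
  have hi := hprefix (i.1 + 1) i.isLt
  rw [wordProd_castLE_succ, wordProd_castLE_succ, hprefix i.1 i.isLt.le] at hi
  exact mul_right_cancel hi

theorem wordProd_castLE_eq_of_intertwine {n : ℕ} (a b : Fin n → A) (g : ℕ → G) (z : G)
    (h0 : ∀ h : 0 < n, f (b ⟨0, h⟩) = g 0 * f (a ⟨0, h⟩) * z)
    (hsucc : ∀ (k : ℕ) (hk : k + 1 < n),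
      f (b ⟨k + 1, hk⟩) * g k = g (k + 1) * f (a ⟨k + 1, hk⟩))
    (i : Fin n) :
    wordProd f (fun j : Fin (i.1 + 1) => b (Fin.castLE i.isLt j)) =
      g i * wordProd f (fun j : Fin (i.1 + 1) => a (Fin.castLE i.isLt j)) * z := by
  obtain ⟨i, hi⟩ := i
  induction i with
  | zero =>
    rw [wordProd_castLE_succ, wordProd_castLE_succ _ a]
    simpa only [wordProd, mul_one] using h0 hi
  | succ k ih =>
    rw [wordProd_castLE_succ, wordProd_castLE_succ _ a, ih (by omega), ← mul_assoc,
      ← mul_assoc, hsucc k hi]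
    simp only [mul_assoc]

end WordProd

section CohnGroup

variable {A : Type*} [CommRing A]

theorem mk_eq_one_of_mem_CRels {r : FreeGroup A} (hr : r ∈ CRels A) :
    PresentedGroup.mk (CRels A) r = 1 :=
  (QuotientGroup.eq_one_iff r).mpr (Subgroup.subset_normalClosure hr)

theorem hC_mul (u v : Aˣ) : hC u * hC v = hC (u * v) := by
  have h := mk_eq_one_of_mem_CRels (Or.inl (Or.inl ⟨u, v, rfl⟩))
  simp only [_root_.map_mul, map_inv] at h
  exact mul_inv_eq_one.mp h

theorem epsC_mul_epsC_zero_mul (a b : A) :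
    epsC a * epsC (0 : A) * epsC b = hC (-1) * epsC (a + b) := by
  have h := mk_eq_one_of_mem_CRels (Or.inl (Or.inr ⟨a, b, rfl⟩))
  simp only [_root_.map_mul, map_inv] at h
  exact mul_inv_eq_one.mp h

theorem hC_mul_epsC_mul_hC (u : Aˣ) (a : A) :
    hC u * epsC a * hC u = epsC ((u : A) ^ 2 * a) := by
  have h := mk_eq_one_of_mem_CRels (Or.inr ⟨u, a, rfl⟩)
  simp only [_root_.map_mul, map_inv] at h
  exact mul_inv_eq_one.mp h

theorem hC_one : hC (1 : Aˣ) = 1 :=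
  left_eq_mul.mp (by rw [hC_mul, mul_one] : hC (1 : Aˣ) = hC 1 * hC 1)

theorem hC_neg_one_mul_self : hC (-1 : Aˣ) * hC (-1) = 1 := by
  rw [hC_mul, neg_one_mul, neg_neg, hC_one]

theorem epsC_zero_sq : epsC (0 : A) ^ 2 = hC (-1) := by
  have h := epsC_mul_epsC_zero_mul (0 : A) 0
  rw [add_zero] at h
  rw [pow_two, mul_right_cancel h]

theorem commute_hC_neg_one_epsC (a : A) : Commute (hC (-1 : Aˣ)) (epsC a) := by
  have h := hC_mul_epsC_mul_hC (-1 : Aˣ) a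
  rw [Units.val_neg, Units.val_one, neg_one_sq, one_mul] at h
  calc hC (-1 : Aˣ) * epsC a = hC (-1) * epsC a * (hC (-1) * hC (-1)) := by
        rw [hC_neg_one_mul_self, mul_one]
    _ = hC (-1) * epsC a * hC (-1) * hC (-1) := by group
    _ = epsC a * hC (-1) := by rw [h]

theorem epsC_mul_epsC_zero_pow_three_mul (a b : A) :
    epsC a * epsC (0 : A) ^ 3 * epsC b = epsC (a + b) := by
  calc epsC a * epsC (0 : A) ^ 3 * epsC b
      = epsC a * epsC 0 * epsC b * hC (-1) := by
        rw [pow_succ', epsC_zero_sq]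
        simp only [mul_assoc, (commute_hC_neg_one_epsC b).eq]
    _ = epsC (a + b) := by
        rw [epsC_mul_epsC_zero_mul, mul_assoc, ← (commute_hC_neg_one_epsC _).eq, ← mul_assoc,
          hC_neg_one_mul_self, one_mul]

theorem epsC_inv_sq_mul_hC (u : Aˣ) (a : A) :
    epsC (((u⁻¹ : Aˣ) : A) ^ 2 * a) * hC u = (hC u)⁻¹ * epsC a := by
  have hu : (u : A) ^ 2 * (((u⁻¹ : Aˣ) : A) ^ 2 * a) = a := by
    rw [← mul_assoc, ← mul_pow, Units.mul_inv, one_pow, one_mul]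
  calc epsC (((u⁻¹ : Aˣ) : A) ^ 2 * a) * hC u
      = (hC u)⁻¹ * (hC u * epsC (((u⁻¹ : Aˣ) : A) ^ 2 * a) * hC u) := by group
    _ = (hC u)⁻¹ * epsC a := by rw [hC_mul_epsC_mul_hC, hu]

theorem epsC_sq_mul_hC_inv (u : Aˣ) (a : A) :
    epsC ((u : A) ^ 2 * a) * (hC u)⁻¹ = hC u * epsC a := by
  rw [← hC_mul_epsC_mul_hC]
  group

theorem hC_mul_epsC_mul_betaC (u : Aˣ) (a c : A) :
    hC u * epsC a * betaC u c = epsC (a * (u : A) ^ 2 + c * u) := by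
  rw [betaC, yC, ← mul_assoc, ← mul_assoc, hC_mul_epsC_mul_hC,
    epsC_mul_epsC_zero_pow_three_mul]
  congr 1
  ring

theorem epsC_injective : Function.Injective (epsC : A → CGroup A) := by
  intro x y h
  simpa [ESL] using congrArg (fun M => (psiC A M).1 0 0) h

end CohnGroup

/-- Let β = β(u,c) ∈ 𝔹 ⊆ C(A) and a₁,…,aₙ ∈ A.  With b₁ := a₁u² + cu
(= a₁·β) and bᵢ := u^{(-1)^{i-1}·2}aᵢ for i ≥ 2, one has
ε(bᵢ)⋯ε(b₁) = h(u)^{(-1)^{i-1}} ε(aᵢ)⋯ε(a₁) β for all 1 ≤ i ≤ n, and b₁,…,bₙ are the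
unique elements of A with this property.  (Indices are 0-based.) -/
theorem stmt16 (A : Type*) [CommRing A] (n : ℕ) (a : Fin n → A) (u : Aˣ) (c : A)
    (b : Fin n → A)
    (hb : ∀ i : Fin n, b i =
      if i.1 = 0 then a i * (u : A) ^ 2 + c * (u : A)
      else if Even i.1 then (u : A) ^ 2 * a i else ((u⁻¹ : Aˣ) : A) ^ 2 * a i) :
    (∀ i : Fin n,
      wordProd epsC (fun j : Fin (i.1 + 1) => b (Fin.castLE i.isLt j)) =
        (hC u) ^ ((-1 : ℤ) ^ i.1) *
          wordProd epsC (fun j : Fin (i.1 + 1) => a (Fin.castLE i.isLt j)) * betaC u c) ∧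
    (∀ b' : Fin n → A,
      (∀ i : Fin n,
        wordProd epsC (fun j : Fin (i.1 + 1) => b' (Fin.castLE i.isLt j)) =
          (hC u) ^ ((-1 : ℤ) ^ i.1) *
            wordProd epsC (fun j : Fin (i.1 + 1) => a (Fin.castLE i.isLt j)) * betaC u c) →
      b' = b) := by
  have hfirst : ∀ h : 0 < n, epsC (b ⟨0, h⟩) =
      hC u ^ ((-1 : ℤ) ^ 0) * epsC (a ⟨0, h⟩) * betaC u c := fun h => by
    rw [pow_zero, zpow_one, hC_mul_epsC_mul_betaC, hb, if_pos rfl]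
  have hnext : ∀ (k : ℕ) (hk : k + 1 < n), epsC (b ⟨k + 1, hk⟩) * hC u ^ ((-1 : ℤ) ^ k) =
      hC u ^ ((-1 : ℤ) ^ (k + 1)) * epsC (a ⟨k + 1, hk⟩) := fun k hk => by
    rw [hb, if_neg k.succ_ne_zero]
    rcases Nat.even_or_odd k with hk | hk
    · rw [if_neg (Nat.not_even_iff_odd.mpr hk.add_one), hk.neg_one_pow, hk.add_one.neg_one_pow,
        zpow_one, _root_.zpow_neg_one, epsC_inv_sq_mul_hC]
    · rw [if_pos (Nat.even_add_one.mpr (Nat.not_even_iff_odd.mpr hk)), hk.neg_one_pow,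
        hk.add_one.neg_one_pow, zpow_one, _root_.zpow_neg_one, epsC_sq_mul_hC_inv]
  have hwords := wordProd_castLE_eq_of_intertwine epsC a b _ _ hfirst hnext
  exact ⟨hwords, fun b' hb' =>
    eq_of_wordProd_castLE_eq epsC epsC_injective fun i => (hb' i).trans (hwords i).symm⟩
end
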